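/- Fix an integer N ≥ 0 and let A be the (N+1) × (N+1) Hilbert matrix over ℝ, with entries (indexed by i, j ∈ {0, 1, …, N}) A_{i,j} = 1/(i + j + 1). Then A is invertible, and its inverse B = A⁻¹ has entries B_{i,j} = (−1)^{i+j} · (i + j + 1) · C(N + 1 + i, N − j) · C(N + 1 + j, N − i) · C(i + j, i)², where C(·,·) denotes the binomial coefficient; that is, A·B = I and B·A = I. -/

import Mathlib

open Matrix

/-!
The entries of `B` are the residues of a rational function. For fixed `j`, let
`P(x) = ∏_{m ≤ N, m ≠ j} (x - m)`, a polynomial of degree `N`. Lagrange interpolation of `P` at the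
`N + 1` nodes `-(k + 1)` is the partial fraction decomposition
`P(x) / ∏_k (x + k + 1) = ∑_k r_k / (x + k + 1)`, and a factorial computation shows that
`B_{kj} = c_j r_k`, where `c_j` normalises the left side to be `1` at `x = j`. Evaluating at `x = i`
gives `(A B)_{ij} = c_j P(i) / ∏_k (i + k + 1) = δ_{ij}`, since `P` vanishes at every `i ≠ j`.
-/

open Finset Polynomial Lagrange Nat

theorem Lagrange.eval_eq_eval_nodal_mul_sum_nodalWeight {F ι : Type*} [Field F]
    [DecidableEq ι] {s : Finset ι} {v : ι → F} (hvs : Set.InjOn v s) {P : F[X]}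
    (hP : P.degree < #s) {x : F} (hx : ∀ i ∈ s, x ≠ v i) :
    P.eval x = (nodal s v).eval x * ∑ i ∈ s, nodalWeight s v i * (x - v i)⁻¹ * P.eval (v i) := by
  conv_lhs => rw [eq_interpolate hvs hP]
  exact eval_interpolate_not_at_node _ hx

section ProductFormulas

variable {R : Type*} [CommRing R]

theorem prod_erase_range_neg {N j : ℕ} (hj : j ≤ N) (f : ℕ → R) :
    ∏ m ∈ (range (N + 1)).erase j, -f m = (-1) ^ N * ∏ m ∈ (range (N + 1)).erase j, f m := by
  rw [prod_neg, card_erase_of_mem (mem_range.2 (lt_succ_of_le hj)), card_range, succ_sub_one]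

theorem prod_range_cast_sub_self (k : ℕ) : ∏ m ∈ range k, ((m : R) - k) = (-1) ^ k * k ! := by
  calc ∏ m ∈ range k, ((m : R) - k) = ∏ m ∈ range k, (-1 * ((m : R) + 1)) := by
        rw [← prod_range_reflect]
        refine prod_congr rfl fun m hm => ?_
        rw [show k - 1 - m = k - (m + 1) by omega, Nat.cast_sub (mem_range.1 hm)]
        push_cast
        ring
    _ = (-1) ^ k * k ! := by
        rw [prod_mul_distrib, prod_const, card_range, ← prod_range_add_one_eq_factorial]
        push_cast
        rfl

theorem prod_erase_range_cast_sub {N k : ℕ} (hk : k ≤ N) :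
    ∏ m ∈ (range (N + 1)).erase k, ((m : R) - k) = (-1) ^ k * k ! * (N - k)! := by
  have hsplit : (range (N + 1)).erase k = range k ∪ Ico (k + 1) (N + 1) := by
    ext m; simp only [mem_erase, mem_range, mem_union, mem_Ico]; omega
  have hdisj : Disjoint (range k) (Ico (k + 1) (N + 1)) := by
    simp only [disjoint_left, mem_range, mem_Ico]; omega
  rw [hsplit, prod_union hdisj, prod_range_cast_sub_self, prod_Ico_eq_prod_range,
    show N + 1 - (k + 1) = N - k by omega, ← prod_range_add_one_eq_factorial (N - k)]
  push_cast
  exact congrArg _ (prod_congr rfl fun m _ => by ring)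

end ProductFormulas

theorem prod_range_cast_add_add_one {K : Type*} [Field K] [CharZero K] (a n : ℕ) :
    ∏ l ∈ range n, ((a : K) + l + 1) = (a + n)! / a ! := by
  rw [eq_div_iff (cast_ne_zero.2 a.factorial_ne_zero), ← factorial_mul_ascFactorial,
    ascFactorial_eq_prod_range]
  push_cast
  rw [mul_comm]
  exact congrArg _ (prod_congr rfl fun l _ => by ring)

namespace Hilbert

variable {K : Type*} [Field K]

def matrix (N : ℕ) : Matrix (Fin (N + 1)) (Fin (N + 1)) K :=
  of fun i j => 1 / (((i : ℕ) : K) + (j : ℕ) + 1)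

def inverseEntry (N i j : ℕ) : K :=
  (-1) ^ (i + j) * ((i : K) + j + 1) * ((N + 1 + i).choose (N - j) : K)
    * ((N + 1 + j).choose (N - i) : K) * ((i + j).choose i : K) ^ 2

def inverse (N : ℕ) : Matrix (Fin (N + 1)) (Fin (N + 1)) K :=
  of fun i j => inverseEntry N i j

theorem inverseEntry_eq_factorial [CharZero K] {N i j : ℕ} (hi : i ≤ N) (hj : j ≤ N) :
    inverseEntry N i j = (-1 : K) ^ (i + j) * (N + 1 + i)! * (N + 1 + j)!
      / ((i + j + 1) * (i ! * j !) ^ 2 * (N - i)! * (N - j)!) := by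
  have hij : ((i : K) + j + 1) ≠ 0 := by norm_cast
  have hfac : ((i + j + 1)! : K) = ((i : K) + j + 1) * (i + j)! := by
    push_cast [Nat.factorial_succ]; ring
  rw [inverseEntry, cast_choose K (by omega : N - j ≤ N + 1 + i),
    cast_choose K (by omega : N - i ≤ N + 1 + j), cast_choose K (le_add_right i j),
    show N + 1 + i - (N - j) = i + j + 1 by omega, show N + 1 + j - (N - i) = i + j + 1 by omega,
    add_tsub_cancel_left, hfac]
  field_simp [Nat.factorial_ne_zero]

theorem eval_nodal_neg_succ [CharZero K] (N a : ℕ) :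
    (nodal (range (N + 1)) fun k : ℕ => -((k : K) + 1)).eval (a : K) = (a + N + 1)! / a ! := by
  rw [eval_nodal, show a + N + 1 = a + (N + 1) from rfl, ← prod_range_cast_add_add_one]
  exact prod_congr rfl fun l _ => by ring

theorem nodalWeight_neg_succ {N k : ℕ} (hk : k ≤ N) :
    nodalWeight (range (N + 1)) (fun k : ℕ => -((k : K) + 1)) k
      = ((-1 : K) ^ k * k ! * (N - k)!)⁻¹ := by
  rw [nodalWeight, prod_inv_distrib, ← prod_erase_range_cast_sub hk]
  exact congrArg _ (prod_congr rfl fun l _ => by ring)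

theorem eval_nodal_erase_neg_succ [CharZero K] {N j : ℕ} (hj : j ≤ N) (k : ℕ) :
    (nodal ((range (N + 1)).erase j) fun m : ℕ => (m : K)).eval (-((k : K) + 1))
      = (-1) ^ N * ((k + N + 1)! / k !) / (k + j + 1) := by
  have hprod := prod_erase_mul _ (fun m : ℕ => (k : K) + m + 1) (mem_range.2 (lt_succ_of_le hj))
  rw [prod_range_cast_add_add_one] at hprod
  rw [eval_nodal, eq_div_iff (by norm_cast), show k + N + 1 = k + (N + 1) from rfl, ← hprod,
    ← mul_assoc, ← prod_erase_range_neg hj]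
  exact congrArg (· * _) (prod_congr rfl fun m _ => by ring)

theorem eval_nodal_erase_self {N j : ℕ} (hj : j ≤ N) :
    (nodal ((range (N + 1)).erase j) fun m : ℕ => (m : K)).eval (j : K)
      = (-1) ^ (N + j) * j ! * (N - j)! := by
  rw [eval_nodal, pow_add, mul_assoc, mul_assoc, ← mul_assoc _ (j ! : K),
    ← prod_erase_range_cast_sub hj, ← prod_erase_range_neg hj]
  exact prod_congr rfl fun m _ => by ring

theorem inverseEntry_eq_residue [CharZero K] {N j k : ℕ} (hj : j ≤ N) (hk : k ≤ N) :
    inverseEntry N k j =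
      (nodal (range (N + 1)) fun l : ℕ => -((l : K) + 1)).eval (j : K)
        / (nodal ((range (N + 1)).erase j) fun m : ℕ => (m : K)).eval (j : K)
        * (nodalWeight (range (N + 1)) (fun l : ℕ => -((l : K) + 1)) k
          * (nodal ((range (N + 1)).erase j) fun m : ℕ => (m : K)).eval (-((k : K) + 1))) := by
  have hkj : (k : K) + j + 1 ≠ 0 := by norm_cast
  rw [inverseEntry_eq_factorial hk hj, eval_nodal_neg_succ, eval_nodal_erase_self hj,
    nodalWeight_neg_succ hk, eval_nodal_erase_neg_succ hj]
  field_simp [Nat.factorial_ne_zero]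
  ring_nf
  simp only [pow_mul', neg_one_sq, one_pow, mul_one]

theorem sum_one_div_mul_inverseEntry [CharZero K] {N i j : ℕ} (hi : i ≤ N) (hj : j ≤ N) :
    ∑ k ∈ range (N + 1), 1 / ((i : K) + k + 1) * inverseEntry N k j = if i = j then 1 else 0 := by
  set s := range (N + 1)
  set v : ℕ → K := fun l => -((l : K) + 1)
  set P := nodal (s.erase j) fun m : ℕ => (m : K)
  have hv : Set.InjOn v s := fun a _ b _ h => by simpa [v] using h
  have hP : P.degree < #s := by
    rw [degree_nodal, card_erase_of_mem (mem_range.2 (lt_succ_of_le hj)), card_range]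
    exact_mod_cast lt_add_one N
  have hnode : ∀ x : ℕ, ∀ k ∈ s, (x : K) ≠ v k := fun x k _ => by
    rw [ne_eq, eq_neg_iff_add_eq_zero]; norm_cast
  have hnodal : ∀ x : ℕ, (nodal s v).eval (x : K) ≠ 0 := fun x => eval_nodal_not_at_node (hnode x)
  calc ∑ k ∈ s, 1 / ((i : K) + k + 1) * inverseEntry N k j
      = (nodal s v).eval (j : K) / P.eval (j : K)
          * ∑ k ∈ s, nodalWeight s v k * ((i : K) - v k)⁻¹ * P.eval (v k) := by
        rw [mul_sum]
        refine sum_congr rfl fun k hk => ?_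
        rw [inverseEntry_eq_residue hj (Nat.lt_succ_iff.1 (mem_range.1 hk))]
        simp only [v]
        ring
    _ = (nodal s v).eval (j : K) / P.eval (j : K) * (P.eval (i : K) / (nodal s v).eval (i : K)) := by
        rw [Lagrange.eval_eq_eval_nodal_mul_sum_nodalWeight hv hP (hnode i),
          mul_div_cancel_left₀ _ (hnodal i)]
    _ = if i = j then 1 else 0 := by
        split_ifs with hij
        · subst hij
          have hPi : P.eval (i : K) ≠ 0 := eval_nodal_not_at_node fun m hm => by
            rw [ne_eq, Nat.cast_inj]; exact (ne_of_mem_erase hm).symm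
          field_simp [hnodal i]
        · rw [eval_nodal_at_node (mem_erase.2 ⟨hij, mem_range.2 (lt_succ_of_le hi)⟩)]
          simp

theorem matrix_mul_inverse [CharZero K] (N : ℕ) : matrix N * inverse N = (1 : Matrix _ _ K) := by
  ext i j
  calc ∑ k, matrix N i k * inverse N k j
      = ∑ k ∈ range (N + 1), 1 / ((i : K) + k + 1) * inverseEntry N k j :=
        Fin.sum_univ_eq_sum_range (fun k => 1 / ((i : K) + k + 1) * inverseEntry N k j) _
    _ = if (i : ℕ) = j then 1 else 0 := sum_one_div_mul_inverseEntry i.is_le j.is_le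
    _ = (1 : Matrix _ _ K) i j := by simp only [one_apply, Fin.val_inj]

end Hilbert

/-- The (N+1)×(N+1) Hilbert matrix is invertible, with inverse given by the classical
closed-form expression in terms of binomial coefficients. -/
theorem hilbert_matrix_inverse
    (N : ℕ)
    (A B : Matrix (Fin (N + 1)) (Fin (N + 1)) ℝ)
    (hA : ∀ i j : Fin (N + 1), A i j = 1 / ((i : ℕ) + (j : ℕ) + 1))
    (hB : ∀ i j : Fin (N + 1),
      B i j = (-1 : ℝ) ^ ((i : ℕ) + (j : ℕ)) * ((i : ℕ) + (j : ℕ) + 1)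
        * (Nat.choose (N + 1 + (i : ℕ)) (N - (j : ℕ)))
        * (Nat.choose (N + 1 + (j : ℕ)) (N - (i : ℕ)))
        * ((Nat.choose ((i : ℕ) + (j : ℕ)) (i : ℕ)) : ℝ) ^ 2) :
    IsUnit A ∧ A * B = 1 ∧ B * A = 1 := by
  obtain rfl : A = Hilbert.matrix N := Matrix.ext hA
  obtain rfl : B = Hilbert.inverse N := Matrix.ext hB
  have hAB := Hilbert.matrix_mul_inverse (K := ℝ) N
  exact ⟨IsUnit.of_mul_eq_one _ hAB, hAB, mul_eq_one_comm.mp hAB⟩
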